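/- arXiv:1008.1217 — 5 statements merged into one kernel-verified Lean document; each statement's English description precedes it below -/
import Mathlib

section
/- Let A be a diagonalizable upper triangular n × n matrix over a field k. Then there exists an invertible upper triangular matrix P in GL_n(k) such that P^{-1} A P is diagonal. -/
/-!
A diagonalizable matrix is annihilated by a separable polynomial `q`. If `A` is upper triangular,
every diagonal entry `λ = A j j` is a root of `q`, hence a simple one, and `r = q / (X - λ)`
satisfies `(A - λ) r(A) = q(A) = 0` and `r(λ) ≠ 0`. So the `j`-th column of `r(A)` is a
`λ`-eigenvector of `A`; it vanishes below row `j` because `r(A)` is upper triangular, and its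
`j`-th entry is `r(λ)`. These columns form an upper triangular eigenbasis.
-/

/-- A square matrix over a field is diagonalizable if it is similar (over that field)
to a diagonal matrix. -/
def Matrix.IsDiagonalizable {n : ℕ} {k : Type*} [Field k]
    (A : Matrix (Fin n) (Fin n) k) : Prop :=
  ∃ P : Matrix (Fin n) (Fin n) k, IsUnit P ∧ (P⁻¹ * A * P).IsDiag

open Polynomial

namespace Polynomial

theorem Separable.eval_divByMonic_X_sub_C_ne_zero {R : Type*} [CommRing R] [Nontrivial R]
    {q : R[X]} (hq : q.Separable) {a : R} (ha : q.IsRoot a) : eval a (q /ₘ (X - C a)) ≠ 0 := by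
  have hq0 : q ≠ 0 := hq.ne_zero
  have hmult : q.rootMultiplicity a = 1 :=
    (rootMultiplicity_le_one_of_separable hq a).antisymm ((rootMultiplicity_pos hq0).2 ha)
  simpa only [hmult, pow_one] using eval_divByMonic_pow_rootMultiplicity_ne_zero a hq0

theorem mul_aeval_divByMonic_X_sub_C {R S : Type*} [CommRing R] [Ring S] [Algebra R S]
    {q : R[X]} {a : R} (ha : q.IsRoot a) {x : S} (hx : aeval x q = 0) :
    x * aeval x (q /ₘ (X - C a)) = a • aeval x (q /ₘ (X - C a)) := by
  have h := congrArg (aeval x) (mul_divByMonic_eq_iff_isRoot.2 ha)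
  rw [map_mul, map_sub, aeval_X, aeval_C, hx, sub_mul, sub_eq_zero] at h
  rwa [Algebra.smul_def]

end Polynomial

namespace Matrix

section DecidableEq

variable {m R : Type*} [Fintype m] [DecidableEq m] [CommSemiring R]

theorem aeval_diagonal (d : m → R) (p : R[X]) :
    aeval (diagonal d) p = diagonal fun i => eval (d i) p := by
  rw [← diagonalAlgHom_apply R, aeval_algHom_apply, aeval_pi_apply]
  rfl

theorem BlockTriangular.aeval {α : Type*} [LinearOrder α] {b : m → α} {M : Matrix m m R}
    (hM : M.BlockTriangular b) (p : R[X]) : (Polynomial.aeval M p).BlockTriangular b :=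
  Algebra.adjoin_le (S := blockTriangularSubalgebra R R b) (Set.singleton_subset_iff.2 hM)
    (aeval_mem_adjoin_singleton R M)

end DecidableEq

theorem IsDiagonalizable.exists_separable_aeval_eq_zero {n : ℕ} {K : Type*} [Field K]
    {A : Matrix (Fin n) (Fin n) K} (hA : A.IsDiagonalizable) :
    ∃ q : K[X], q.Separable ∧ aeval A q = 0 := by
  classical
  obtain ⟨P, hP, hD⟩ := hA
  set D := P⁻¹ * A * P
  let q := ∏ μ ∈ Finset.univ.image D.diag, (X - C μ)
  refine ⟨q, separable_prod_X_sub_C_iff'.2 fun _ _ _ _ => id, ?_⟩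
  have hqD : aeval D q = 0 := by
    rw [← hD.diagonal_diag, aeval_diagonal, ← diagonal_zero]
    congr 1
    funext i
    rw [eval_prod]
    exact Finset.prod_eq_zero (Finset.mem_image_of_mem _ (Finset.mem_univ i)) (by simp)
  have hAD : A = ConjAct.toConjAct hP.unit • D := by
    rw [ConjAct.units_smul_def, ConjAct.ofConjAct_toConjAct, coe_units_inv, IsUnit.unit_spec]
    have hdet := (isUnit_iff_isUnit_det P).1 hP
    simp only [D, Matrix.mul_assoc, mul_nonsing_inv_cancel_left _ _ hdet, mul_nonsing_inv _ hdet,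
      Matrix.mul_one]
  rw [hAD, aeval_smul, hqD, smul_zero]

section LinearOrder

variable {m : Type*} [Fintype m] [LinearOrder m]

theorem IsUpperTriangular.mul_apply_self {R : Type*} [Semiring R] {M N : Matrix m m R}
    (hM : M.IsUpperTriangular) (hN : N.IsUpperTriangular) (i : m) :
    (M * N) i i = M i i * N i i := by
  rw [mul_apply]
  refine Finset.sum_eq_single i (fun j _ hji => ?_) (by simp)
  rcases hji.lt_or_gt with hj | hj
  · rw [hM hj, zero_mul]
  · rw [hN hj, mul_zero]

theorem IsUpperTriangular.pow_apply_self {R : Type*} [Semiring R] {M : Matrix m m R}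
    (hM : M.IsUpperTriangular) (k : ℕ) (i : m) : (M ^ k) i i = M i i ^ k := by
  induction k with
  | zero => simp
  | succ k ih => rw [pow_succ, mul_apply_self (hM.pow k) hM, ih, pow_succ]

theorem IsUpperTriangular.aeval_apply_self {R : Type*} [CommSemiring R] {M : Matrix m m R}
    (hM : M.IsUpperTriangular) (p : R[X]) (i : m) : aeval M p i i = eval (M i i) p := by
  induction p using Polynomial.induction_on' with
  | add p q hp hq => simp [hp, hq]
  | monomial k c =>
    rw [aeval_monomial, ← Algebra.smul_def, smul_apply, hM.pow_apply_self, eval_monomial,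
      smul_eq_mul]

theorem IsUpperTriangular.exists_isUpperTriangular_isDiag_conj_of_separable {K : Type*} [Field K]
    {A : Matrix m m K} (hA : A.IsUpperTriangular) {q : K[X]} (hq : q.Separable)
    (hqA : aeval A q = 0) :
    ∃ P : Matrix m m K, IsUnit P ∧ P.IsUpperTriangular ∧ (P⁻¹ * A * P).IsDiag := by
  have hroot (j : m) : q.IsRoot (A j j) := by
    rw [IsRoot, ← hA.aeval_apply_self, hqA, zero_apply]
  let r (j : m) : K[X] := q /ₘ (X - C (A j j))
  let P : Matrix m m K := of fun i j => aeval A (r j) i j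
  have hPtri : P.IsUpperTriangular := fun i j hij => hA.aeval (r j) hij
  have hPdiag (j : m) : P j j ≠ 0 := by
    simpa only [P, of_apply, hA.aeval_apply_self] using hq.eval_divByMonic_X_sub_C_ne_zero (hroot j)
  have hAP : A * P = P * diagonal A.diag := by
    ext i j
    have hcol : A * aeval A (r j) = A j j • aeval A (r j) :=
      mul_aeval_divByMonic_X_sub_C (hroot j) hqA
    rw [mul_diagonal, diag_apply, mul_comm]
    simpa only [mul_apply, P, of_apply, smul_apply, smul_eq_mul] using congrFun (congrFun hcol i) j
  have hPdet : IsUnit P.det := by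
    rw [det_of_isUpperTriangular hPtri, isUnit_iff_ne_zero]
    exact Finset.prod_ne_zero_iff.2 fun j _ => hPdiag j
  refine ⟨P, (isUnit_iff_isUnit_det P).2 hPdet, hPtri, ?_⟩
  rw [Matrix.mul_assoc, hAP, ← Matrix.mul_assoc, nonsing_inv_mul _ hPdet, Matrix.one_mul]
  exact isDiag_diagonal _

end LinearOrder

end Matrix

/-- If `A` is a diagonalizable upper triangular matrix over a field `k`, then there is an
invertible *upper triangular* matrix `P` such that `P⁻¹ * A * P` is diagonal. -/
theorem upperTriangular_diagonalizable_by_upperTriangular {n : ℕ} {k : Type*} [Field k]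
    (A : Matrix (Fin n) (Fin n) k) (hA : ∀ i j : Fin n, j < i → A i j = 0)
    (hdiag : A.IsDiagonalizable) :
    ∃ P : Matrix (Fin n) (Fin n) k, IsUnit P ∧ (∀ i j : Fin n, j < i → P i j = 0) ∧
      (P⁻¹ * A * P).IsDiag := by
  obtain ⟨q, hq, hqA⟩ := hdiag.exists_separable_aeval_eq_zero
  obtain ⟨P, hP, hPtri, hPA⟩ :=
    Matrix.IsUpperTriangular.exists_isUpperTriangular_isDiag_conj_of_separable
      (fun i j => hA i j) hq hqA
  exact ⟨P, hP, fun i j => @hPtri i j, hPA⟩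
end

section
/- Let V be a finite-dimensional vector space over a field k, let S : V → V be a diagonalizable endomorphism, and let B be an ordered basis of V such that the matrix of S with respect to B is upper triangular. Let V_0 be the 0-eigenspace (kernel) of S and let V_* be the sum of the eigenspaces of S for all nonzero eigenvalues, so V = V_0 ⊕ V_*. Let P : V → V be the projection with image V_* and kernel V_0. Let T : V → V be an endomorphism whose matrix with respect to B is strictly upper triangular. Then the restriction of P ∘ (S + T) to V_*, as an endomorphism of V_*, is invertible. -/
/-!
Suppose `x ∈ V⋆` is nonzero and `P ((S + T) x) = 0`; then `u = (S + T) x` lies in `ker S`, because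
`V = ker S ⊕ V⋆`. Let `j` be the last index at which the `B`-coordinate of `x` is nonzero. As `S` is
upper triangular and `T` strictly so, `u` vanishes beyond `j` as well, with `u_j = S_jj x_j`.
`S` preserves `V⋆ ∩ {v | v_l = 0 for l > j}` and is injective there, hence surjective, which forces
`S_jj ≠ 0`. But then `(S u)_j = S_jj ^ 2 x_j ≠ 0`, contradicting `S u = 0`.
-/

open Module LinearMap

lemma Module.End.map_mem_iSup_eigenspace_ne_zero {R M : Type*} [CommRing R] [AddCommGroup M]
    [Module R M] (f : End R M) {v : M} (hv : v ∈ ⨆ μ : R, ⨆ _ : μ ≠ 0, f.eigenspace μ) :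
    f v ∈ ⨆ μ : R, ⨆ _ : μ ≠ 0, f.eigenspace μ := by
  suffices h : ⨆ μ : R, ⨆ _ : μ ≠ 0, f.eigenspace μ ≤
      (⨆ μ : R, ⨆ _ : μ ≠ 0, f.eigenspace μ).comap f from h hv
  refine iSup₂_le fun μ hμ w hw => ?_
  rw [Submodule.mem_comap, End.mem_eigenspace_iff.mp hw]
  exact Submodule.smul_mem _ μ (Submodule.mem_iSup_of_mem μ (Submodule.mem_iSup_of_mem hμ hw))

namespace Module.Basis

variable {R M ι : Type*} [CommRing R] [AddCommGroup M] [Module R M] [LinearOrder ι]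
  (B : Basis ι R M)

def vanishAbove (j : ι) : Submodule R M where
  carrier := {v | ∀ l, j < l → B.repr v l = 0}
  add_mem' hv hw l hl := by simp [hv l hl, hw l hl]
  zero_mem' := by simp
  smul_mem' c v hv l hl := by simp [hv l hl]

lemma exists_mem_vanishAbove_repr_ne_zero {v : M} (hv : v ≠ 0) :
    ∃ j, v ∈ B.vanishAbove j ∧ B.repr v j ≠ 0 := by
  have hsupp : (B.repr v).support.Nonempty := by simpa using hv
  refine ⟨_, fun l hl => ?_, Finsupp.mem_support_iff.mp ((B.repr v).support.max'_mem hsupp)⟩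
  by_contra h
  exact (Finset.le_max' _ l (Finsupp.mem_support_iff.mpr h)).not_gt hl

variable [Fintype ι] {f : End R M} (hf : (LinearMap.toMatrix B B f).IsUpperTriangular)
include hf

lemma repr_apply_of_mem_vanishAbove {j : ι} {v : M} (hv : v ∈ B.vanishAbove j)
    {i : ι} (hji : j ≤ i) : B.repr (f v) i = LinearMap.toMatrix B B f i j * B.repr v j := by
  rw [← LinearMap.toMatrix_mulVec_repr B B f v, Matrix.mulVec, dotProduct]
  refine Finset.sum_eq_single j (fun l _ hlj => ?_) (by simp)
  rcases hlj.lt_or_gt with hlj | hjl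
  · rw [hf (hlj.trans_le hji), zero_mul]
  · rw [hv l hjl, mul_zero]

lemma map_mem_vanishAbove {j : ι} {v : M} (hv : v ∈ B.vanishAbove j) :
    f v ∈ B.vanishAbove j := fun i hji => by
  rw [repr_apply_of_mem_vanishAbove B hf hv hji.le, hf hji, zero_mul]

end Module.Basis

lemma Module.Basis.toMatrix_diag_ne_zero_of_mem_iSup_eigenspace_ne_zero {k V ι : Type*} [Field k]
    [AddCommGroup V] [Module k V] [FiniteDimensional k V] [Fintype ι] [LinearOrder ι]
    (B : Basis ι k V) {f : End k V} (hf : (LinearMap.toMatrix B B f).IsUpperTriangular)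
    {j : ι} {v : V} (hv : v ∈ ⨆ μ : k, ⨆ _ : μ ≠ 0, f.eigenspace μ) (hvj : v ∈ B.vanishAbove j)
    (hv0 : B.repr v j ≠ 0) : LinearMap.toMatrix B B f j j ≠ 0 := by
  set W := (⨆ μ : k, ⨆ _ : μ ≠ 0, f.eigenspace μ) ⊓ B.vanishAbove j
  have hmaps : ∀ w ∈ W, f w ∈ W := fun w hw =>
    ⟨f.map_mem_iSup_eigenspace_ne_zero hw.1, B.map_mem_vanishAbove hf hw.2⟩
  have hinj : Function.Injective (f.restrict hmaps) := by
    rw [← ker_eq_bot, Submodule.eq_bot_iff]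
    rintro ⟨w, hw, _⟩ hker
    have hw0 : w ∈ f.eigenspace 0 := by
      simpa [End.eigenspace_zero] using congrArg Subtype.val hker
    exact Subtype.ext ((f.eigenspaces_iSupIndep 0).le_bot ⟨hw0, hw⟩)
  obtain ⟨⟨w, _, hwj⟩, hpre⟩ := injective_iff_surjective.mp hinj ⟨v, hv, hvj⟩
  have hvw : B.repr v j = LinearMap.toMatrix B B f j j * B.repr w j := by
    rw [← B.repr_apply_of_mem_vanishAbove hf hwj le_rfl]
    exact congrArg (fun u : W => B.repr u j) hpre.symm
  intro h0
  rw [h0, zero_mul] at hvw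
  exact hv0 hvw

lemma Submodule.mem_of_projection_apply_eq_zero {R M : Type*} [Semiring R] [AddCommMonoid M]
    [Module R M] {A C : Submodule R M} (hAC : A ⊔ C = ⊤) {P : M →ₗ[R] M}
    (hA : ∀ v ∈ A, P v = 0) (hC : ∀ v ∈ C, P v = v) {u : M} (hu : P u = 0) : u ∈ A := by
  obtain ⟨a, ha, c, hc, rfl⟩ := Submodule.mem_sup.mp (hAC ▸ Submodule.mem_top : u ∈ A ⊔ C)
  rw [map_add, hA a ha, hC c hc, zero_add] at hu
  rwa [hu, add_zero]

/-- Let `S : V → V` be a diagonalizable endomorphism whose matrix in an ordered basis `B`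
is upper triangular, let `V₀ = ker S` be the `0`-eigenspace and `V⋆` the sum of the
eigenspaces for the nonzero eigenvalues, and let `P` be the projection onto `V⋆` along
`V₀`.  If `T : V → V` has strictly upper triangular matrix in the basis `B`, then the
restriction of `P ∘ (S + T)` to `V⋆` is an invertible endomorphism of `V⋆`. -/
theorem restrict_proj_comp_invertible
    {k : Type*} [Field k] {V : Type*} [AddCommGroup V] [Module k V]
    [FiniteDimensional k V] {m : ℕ} (B : Module.Basis (Fin m) k V)
    (S T P : Module.End k V)
    (hSdiag : ⨆ μ : k, S.eigenspace μ = ⊤)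
    (hStri : ∀ i j : Fin m, j < i → LinearMap.toMatrix B B S i j = 0)
    (hTtri : ∀ i j : Fin m, j ≤ i → LinearMap.toMatrix B B T i j = 0)
    (Vstar : Submodule k V) (hVstar : Vstar = ⨆ μ : k, ⨆ _ : μ ≠ 0, S.eigenspace μ)
    (hPmem : ∀ v : V, P v ∈ Vstar)
    (hPid : ∀ v ∈ Vstar, P v = v)
    (hPker : ∀ v ∈ S.eigenspace 0, P v = 0) :
    Function.Bijective ((P ∘ₗ (S + T)).restrict
      (fun x (_ : x ∈ Vstar) => hPmem ((S + T) x))) := by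
  have hS : (LinearMap.toMatrix B B S).IsUpperTriangular := fun i j => hStri i j
  have hST : (LinearMap.toMatrix B B (S + T)).IsUpperTriangular := by
    rw [map_add]
    exact hS.add fun i j hji => hTtri i j hji.le
  have hsplit : S.eigenspace 0 ⊔ Vstar = ⊤ := by rw [hVstar, ← iSup_split_single, hSdiag]
  suffices hinj : Function.Injective ((P ∘ₗ (S + T)).restrict
      (fun x (_ : x ∈ Vstar) => hPmem ((S + T) x))) from
    ⟨hinj, LinearMap.injective_iff_surjective.mp hinj⟩
  rw [← LinearMap.ker_eq_bot, Submodule.eq_bot_iff]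
  rintro ⟨x, hx⟩ hPx
  by_contra hx0
  obtain ⟨j, hxj, hxj0⟩ := B.exists_mem_vanishAbove_repr_ne_zero (Subtype.coe_ne_coe.mpr hx0)
  have hSjj := B.toMatrix_diag_ne_zero_of_mem_iSup_eigenspace_ne_zero hS (hVstar ▸ hx) hxj hxj0
  have hker : (S + T) x ∈ S.eigenspace 0 :=
    Submodule.mem_of_projection_apply_eq_zero hsplit hPker hPid (congrArg Subtype.val hPx)
  have hux : B.repr ((S + T) x) j = LinearMap.toMatrix B B S j j * B.repr x j := by
    rw [B.repr_apply_of_mem_vanishAbove hST hxj le_rfl, map_add, Matrix.add_apply,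
      hTtri j j le_rfl, add_zero]
  have hSu := B.repr_apply_of_mem_vanishAbove hS (B.map_mem_vanishAbove hST hxj) le_rfl
  rw [Module.End.mem_eigenspace_iff.mp hker, zero_smul, map_zero, hux] at hSu
  exact mul_ne_zero hSjj (mul_ne_zero hSjj hxj0) hSu.symm
end

section
/- Let k be an algebraically closed field of characteristic zero, g a finite-dimensional Lie algebra over k with solvable radical r, and V a finite-dimensional irreducible g-module. Then the ideal [g,r] acts trivially on V: for every y in [g,r] and every v in V, y · v = 0. -/
/-!
By Lie's theorem the radical `r` has a common eigenvector in `V`, with weight `χ`. The weight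
space of `χ` is `g`-invariant, hence all of `V` by irreducibility, so each `z ∈ r` acts as the
scalar `χ z`. An element of `[g, r]` acts with trace zero, being a sum of commutators, and a
scalar of trace zero vanishes in characteristic zero.
-/

open LieModule LinearMap

theorem Module.End.eq_zero_of_eq_smul_one_of_trace_eq_zero {k V : Type*} [Field k] [CharZero k]
    [AddCommGroup V] [Module k V] [FiniteDimensional k V] {f : Module.End k V} {c : k}
    (hf : f = c • 1) (htr : trace k V f = 0) : f = 0 := by
  rw [hf, map_smul, trace_one, smul_eq_mul, mul_eq_zero, Nat.cast_eq_zero,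
    Module.finrank_zero_iff] at htr
  rcases htr with hc | hV
  · rw [hf, hc, zero_smul]
  · exact Subsingleton.elim _ _

theorem LieModule.lie_eq_smul_of_isIrreducible {R L V : Type*} [CommRing R]
    [IsPrincipalIdealRing R] [IsDomain R] [CharZero R] [LieRing L] [LieAlgebra R L]
    [AddCommGroup V] [Module R V] [Module.Free R V] [Module.Finite R V]
    [LieRingModule L V] [LieModule R L V] [IsIrreducible R L V]
    (I : LieIdeal R L) (χ : I → R) [Nontrivial (weightSpace V χ)] (z : I) (v : V) :
    ⁅(z : L), v⁆ = χ z • v := by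
  let W : LieSubmodule R L V := weightSpaceOfIsLieTower R V χ
  have hW : W = ⊤ := (eq_bot_or_eq_top W).resolve_left fun h ↦ by
    obtain ⟨w, hw⟩ := exists_ne (0 : weightSpace V χ)
    have hw' : (w : V) ∈ W := w.2
    rw [h, LieSubmodule.mem_bot] at hw'
    exact hw (Subtype.ext hw')
  have hv : v ∈ W := hW ▸ LieSubmodule.mem_top v
  exact (mem_weightSpace χ v).mp hv z

theorem LieModule.trace_toEnd_eq_zero_of_mem_lie_top {R L V : Type*} [CommRing R] [LieRing L]
    [LieAlgebra R L] [AddCommGroup V] [Module R V] [LieRingModule L V] [LieModule R L V] (I : LieIdeal R L) {y : L}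
    (hy : y ∈ ⁅(⊤ : LieIdeal R L), I⁆) : trace R V (toEnd R L V y) = 0 :=
  trace_toEnd_eq_zero_of_mem_lcs R L V (k := 1) le_rfl (LieSubmodule.mono_lie_right ⊤ le_top hy)

/-- Over an algebraically closed field of characteristic zero, if `r` is the solvable
radical of a finite-dimensional Lie algebra `g`, then the ideal `[g, r]` acts trivially
on every finite-dimensional irreducible `g`-module. -/
theorem bracket_radical_acts_trivially
    (k : Type*) [Field k] [IsAlgClosed k] [CharZero k]
    (g : Type*) [LieRing g] [LieAlgebra k g] [FiniteDimensional k g]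
    (V : Type*) [AddCommGroup V] [Module k V] [FiniteDimensional k V]
    [LieRingModule g V] [LieModule k g V] [LieModule.IsIrreducible k g V]
    (y : g) (hy : y ∈ ⁅(⊤ : LieIdeal k g), LieAlgebra.radical k g⁆) (v : V) :
    ⁅y, v⁆ = 0 := by
  have := nontrivial_of_isIrreducible k g V
  obtain ⟨χ, _⟩ := exists_nontrivial_weightSpace_of_isSolvable k (LieAlgebra.radical k g) V
  let z : LieAlgebra.radical k g := ⟨y, LieSubmodule.lie_le_right _ _ hy⟩
  have hscalar : toEnd k g V y = χ z • 1 :=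
    LinearMap.ext (lie_eq_smul_of_isIrreducible _ χ z)
  have hzero : toEnd k g V y = 0 := Module.End.eq_zero_of_eq_smul_one_of_trace_eq_zero hscalar
    (trace_toEnd_eq_zero_of_mem_lie_top _ hy)
  simpa using LinearMap.congr_fun hzero v
end

section
/- Let k be the field with 2 elements and let g be the 3-dimensional Lie algebra over k with basis i, j, k' satisfying [i,j] = k', [j,k'] = i and [k',i] = j. Then g is perfect (hence simple), but the semisimple part and the nilpotent part of the endomorphism ad(i) in its Jordan-Chevalley decomposition in gl(g) do not both belong to ad(g). -/
/-!
With indices mod 3, `ad (e m) ^ 2 = π_m - 1`, where `π_m` is the coordinate projection onto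
`e m`. Hence every nonzero ideal contains a basis vector, and then all of them, so `g` is simple;
each basis vector is a bracket of the other two, so `g` is perfect. It also gives
`ad (e m) ^ 3 = -ad (e m)`, so in characteristic 2 `D = ad i` is the sum of the commuting
idempotent `D ^ 2` and the square-zero `D + D ^ 2`; by uniqueness of the Jordan–Chevalley
decomposition the semisimple part of `D` is `D ^ 2`. But the diagonal entries of every
`ad x` vanish, while `D ^ 2 j = -j`, so `D ^ 2 ∉ ad g`.
-/

open LieAlgebra Module Polynomial

theorem Module.End.IsSemisimple.of_isIdempotentElem {K V : Type*} [Field K] [AddCommGroup V]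
    [Module K V] {f : End K V} (hf : IsIdempotentElem f) : f.IsSemisimple := by
  refine isSemisimple_of_squarefree_aeval_eq_zero (p := (X - C 0) * (X - C 1)) ?_ ?_
  · exact (separable_X_sub_C.mul separable_X_sub_C
      (isCoprime_X_sub_C_of_isUnit_sub (by simp))).squarefree
  · simp [mul_sub, hf.eq]

theorem isIdempotentElem_sq_of_pow_three_eq_self {R : Type*} [Monoid R] {d : R}
    (hd : d ^ 3 = d) : IsIdempotentElem (d ^ 2) := by
  rw [IsIdempotentElem, ← pow_add, show 2 + 2 = 3 + 1 by rfl, pow_succ, hd, sq]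

theorem self_add_sq_sq_eq_zero_of_pow_three_eq_self {R : Type*} [Ring R] (h2 : (2 : R) = 0)
    {d : R} (hd : d ^ 3 = d) : (d + d ^ 2) ^ 2 = 0 := by
  calc (d + d ^ 2) ^ 2 = 2 * d ^ 3 + d ^ 2 + d ^ 3 * d := by noncomm_ring
    _ = 2 * (d + d ^ 2) := by rw [hd]; noncomm_ring
    _ = 0 := by rw [h2, zero_mul]

theorem Module.End.eq_sq_of_pow_three_eq_neg {K V : Type*} [Field K] [PerfectField K] [CharP K 2]
    [AddCommGroup V] [Module K V] [FiniteDimensional K V] {D S N : End K V} (hD : D ^ 3 = -D)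
    (hDSN : D = S + N) (hS : S.IsSemisimple) (hN : IsNilpotent N) (hSN : Commute S N) :
    S = D ^ 2 := by
  have h2 : (2 : End K V) = 0 := by
    rw [← map_ofNat (algebraMap K (End K V)) 2, CharTwo.two_eq_zero, map_zero]
  have hD' : D ^ 3 = D := by rw [hD, neg_eq_iff_add_eq_zero, ← two_mul, h2, zero_mul]
  have hDecomp : N + S = (D + D ^ 2) + D ^ 2 := by
    rw [add_assoc, ← two_mul, h2, zero_mul, add_zero, hDSN, add_comm]
  have hcomm : Commute (D + D ^ 2) (D ^ 2) := (Commute.self_pow D 2).add_left (Commute.refl _)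
  exact (isNilpotent_isSemisimple_unique hN hS
    ⟨2, self_add_sq_sq_eq_zero_of_pow_three_eq_self h2 hD'⟩
    (.of_isIdempotentElem (isIdempotentElem_sq_of_pow_three_eq_self hD')) hSN.symm hcomm hDecomp).2

theorem LieIdeal.eq_top_of_forall_basis_mem {R L ι : Type*} [CommRing R] [LieRing L]
    [LieAlgebra R L] {I : LieIdeal R L} (e : Basis ι R L) (h : ∀ m, e m ∈ I) : I = ⊤ := by
  rw [← LieSubmodule.toSubmodule_eq_top, eq_top_iff, ← e.span_eq, Submodule.span_le]
  exact Set.range_subset_iff.mpr h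

/-- Indices mod 3: `⁅e 0, e 1⁆ = e 2`, `⁅e 1, e 2⁆ = e 0`, `⁅e 2, e 0⁆ = e 1`. -/
def IsCrossProductBasis {R L : Type*} [CommRing R] [LieRing L] [LieAlgebra R L]
    (e : Basis (Fin 3) R L) : Prop :=
  ∀ m : Fin 3, ⁅e m, e (m + 1)⁆ = e (m + 2)

namespace IsCrossProductBasis

section CommRing

variable {R L : Type*} [CommRing R] [LieRing L] [LieAlgebra R L] {e : Basis (Fin 3) R L}

theorem lie_add_two_self (he : IsCrossProductBasis e) (m : Fin 3) :
    ⁅e (m + 2), e m⁆ = e (m + 1) := by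
  simpa [show m + 2 + 1 = m by omega, show m + 2 + 2 = m + 1 by omega] using he (m + 2)

theorem lie_add_one_add_two (he : IsCrossProductBasis e) (m : Fin 3) :
    ⁅e (m + 1), e (m + 2)⁆ = e m := by
  simpa [show m + 1 + 1 = m + 2 by omega, show m + 1 + 2 = m by omega] using he (m + 1)

theorem lie_self_add_two (he : IsCrossProductBasis e) (m : Fin 3) :
    ⁅e m, e (m + 2)⁆ = -e (m + 1) := by
  rw [← lie_skew, he.lie_add_two_self]

theorem ad_sq_apply (he : IsCrossProductBasis e) (m : Fin 3) (x : L) :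
    (ad R L (e m) ^ 2) x = e.repr x m • e m - x := by
  suffices ad R L (e m) ^ 2 = (e.coord m).smulRight (e m) - 1 by simp [this]
  refine e.ext fun k ↦ ?_
  obtain rfl | rfl | rfl : k = m ∨ k = m + 1 ∨ k = m + 2 := by omega
  · simp [sq]
  · simp [sq, he m, he.lie_self_add_two]
  · simp [sq, he m, he.lie_self_add_two]

theorem repr_lie_apply_self (he : IsCrossProductBasis e) (x : L) (m : Fin 3) :
    e.repr ⁅x, e m⁆ m = 0 := by
  have hbasis (k : Fin 3) : e.repr ⁅e k, e m⁆ m = 0 := by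
    obtain rfl | rfl | rfl : k = m ∨ k = m + 1 ∨ k = m + 2 := by omega
    · simp
    · simp [← lie_skew (e (m + 1)), he m]
    · simp [he.lie_add_two_self]
  rw [← e.sum_repr x, sum_lie]
  simp [hbasis]

theorem lie_top_top (he : IsCrossProductBasis e) :
    ⁅(⊤ : LieIdeal R L), (⊤ : LieIdeal R L)⁆ = ⊤ :=
  LieIdeal.eq_top_of_forall_basis_mem e fun m ↦ he.lie_add_one_add_two m ▸
    LieSubmodule.lie_mem_lie (LieSubmodule.mem_top _) (LieSubmodule.mem_top _)

theorem eq_top_of_mem {I : LieIdeal R L} (he : IsCrossProductBasis e) {m : Fin 3} (hm : e m ∈ I) :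
    I = ⊤ := by
  have hm₂ : e (m + 2) ∈ I := he m ▸ lie_mem_left R L I _ _ hm
  have hm₁ : e (m + 1) ∈ I := he.lie_add_two_self m ▸ I.lie_mem hm
  refine LieIdeal.eq_top_of_forall_basis_mem e fun k ↦ ?_
  obtain rfl | rfl | rfl : k = m ∨ k = m + 1 ∨ k = m + 2 := by omega
  exacts [hm, hm₁, hm₂]

theorem ad_pow_three (he : IsCrossProductBasis e) (m : Fin 3) :
    ad R L (e m) ^ 3 = -ad R L (e m) := by
  ext x
  rw [pow_succ', Module.End.mul_apply, he.ad_sq_apply]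
  simp

theorem ad_sq_notMem_range_ad [Nontrivial R] (he : IsCrossProductBasis e) (m : Fin 3) :
    ad R L (e m) ^ 2 ∉ Set.range (ad R L) := by
  rintro ⟨x, hx⟩
  have h := congr_arg (fun f ↦ e.repr (f (e (m + 1))) (m + 1)) hx
  simp [he.ad_sq_apply, he.repr_lie_apply_self] at h

end CommRing

section Field

variable {K L : Type*} [Field K] [LieRing L] [LieAlgebra K L] {e : Basis (Fin 3) K L}

theorem exists_mem_of_ne_bot (he : IsCrossProductBasis e) {I : LieIdeal K L} (hI : I ≠ ⊥) :
    ∃ m, e m ∈ I := by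
  obtain ⟨x, hxI, hx⟩ : ∃ x ∈ I, x ≠ 0 := by simpa [LieSubmodule.eq_bot_iff] using hI
  obtain ⟨m, hm⟩ : ∃ m, e.repr x m ≠ 0 := by
    by_contra! h
    exact hx (e.repr.map_eq_zero_iff.mp (Finsupp.ext h))
  refine ⟨m, ?_⟩
  have hmem : e.repr x m • e m ∈ I := by
    rw [← sub_add_cancel (e.repr x m • e m) x, ← he.ad_sq_apply]
    exact I.add_mem (I.lie_mem (I.lie_mem hxI)) hxI
  simpa [hm] using I.smul_mem (e.repr x m)⁻¹ hmem

theorem isSimple (he : IsCrossProductBasis e) : IsSimple K L where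
  eq_bot_or_eq_top _ := or_iff_not_imp_left.mpr fun hI ↦
    (he.exists_mem_of_ne_bot hI).elim fun _ ↦ he.eq_top_of_mem
  non_abelian _ := e.ne_zero 2 (he 0 ▸ trivial_lie_zero L L (e 0) (e 1))

end Field

end IsCrossProductBasis

/-- Let `g` be the 3-dimensional Lie algebra over `F₂` with basis `i, j, k'` satisfying
`⁅i,j⁆ = k'`, `⁅j,k'⁆ = i`, `⁅k',i⁆ = j`.  Then `g` is perfect (hence simple), but the
semisimple and nilpotent parts of `ad i` in its Jordan–Chevalley decomposition in
`gl(g)` do not both belong to `ad(g)`. -/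
theorem cross_product_algebra_no_abstract_decomposition
    (g : Type*) [LieRing g] [LieAlgebra (ZMod 2) g]
    (B : Module.Basis (Fin 3) (ZMod 2) g)
    (i j k' : g) (hi : B 0 = i) (hj : B 1 = j) (hk : B 2 = k')
    (hij : ⁅i, j⁆ = k') (hjk : ⁅j, k'⁆ = i) (hki : ⁅k', i⁆ = j) :
    ⁅(⊤ : LieIdeal (ZMod 2) g), (⊤ : LieIdeal (ZMod 2) g)⁆ = ⊤ ∧
      LieAlgebra.IsSimple (ZMod 2) g ∧
      ∀ S N : Module.End (ZMod 2) g,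
        LieAlgebra.ad (ZMod 2) g i = S + N → S.IsSemisimple → IsNilpotent N →
        Commute S N →
        ¬ (S ∈ Set.range (LieAlgebra.ad (ZMod 2) g) ∧
           N ∈ Set.range (LieAlgebra.ad (ZMod 2) g)) := by
  subst hi hj hk
  have hB : IsCrossProductBasis B := by
    intro m
    fin_cases m
    exacts [hij, hjk, hki]
  have : FiniteDimensional (ZMod 2) g := .of_basis B
  refine ⟨hB.lie_top_top, hB.isSimple, fun S N hD hS hN hcomm ⟨hS_ad, _⟩ ↦ ?_⟩
  have hS_eq : S = ad (ZMod 2) g (B 0) ^ 2 :=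
    End.eq_sq_of_pow_three_eq_neg (hB.ad_pow_three 0) hD hS hN hcomm
  exact hB.ad_sq_notMem_range_ad 0 (hS_eq ▸ hS_ad)
end

section
/- Let k be a field of characteristic zero, g a finite-dimensional Lie algebra over k, and x ∈ g. If x has an abstract Jordan-Chevalley decomposition, then x belongs to the derived algebra [g,g]. -/
universe u

attribute [local instance 100] LieRing.ofAssociativeRing

/-- `x = s + n` is an abstract Jordan–Chevalley decomposition of `x` in the Lie algebra `g`:
`x = s + n`, `⁅s, n⁆ = 0`, and for every finite-dimensional representation
`π : g → gl(V)` the endomorphism `π s` is semisimple, `π n` is nilpotent and they commute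
(so that `π x = π s + π n` is the Jordan–Chevalley decomposition of `π x` in `gl(V)`). -/
def IsAbstractJCD (k : Type*) [Field k] {g : Type*} [LieRing g] [LieAlgebra k g]
    (x s n : g) : Prop :=
  x = s + n ∧ ⁅s, n⁆ = 0 ∧
    ∀ (V : Type u) [AddCommGroup V] [Module k V] [FiniteDimensional k V]
      (π : g →ₗ⁅k⁆ Module.End k V),
      (π s).IsSemisimple ∧ IsNilpotent (π n) ∧ Commute (π s) (π n)

/-- `x` has an abstract Jordan–Chevalley decomposition if there exist *unique* `s, n`
as above. -/
def HasAbstractJCD (k : Type*) [Field k] {g : Type*} [LieRing g] [LieAlgebra k g]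
    (x : g) : Prop :=
  ∃! p : g × g, IsAbstractJCD.{u} k x p.1 p.2

/-!
A linear functional `χ` on `g` vanishing on `[g, g]` is a Lie character, and for every
endomorphism `A` the map `y ↦ χ y • A` is a representation, its image being abelian. With
`A = 1` on a line, `π n = χ n • 1` is nilpotent, so `χ n = 0`; with `A` a nonzero square-zero
map on a plane, `π s = χ s • A` is semisimple and nilpotent, hence zero, so `χ s = 0`. Thus
every character kills `x = s + n`, i.e. `x ∈ [g, g]`.

Representations are only tested in a fixed universe `u`. If `k` is not `u`-small, every `k`-module
in `Type u` is zero, so any splitting `x = s + n` with `⁅s, n⁆ = 0` qualifies, and uniqueness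
applied to `(x, 0)` and `(0, x)` forces `x = 0`.
-/

open LieAlgebra

def LieAlgebra.LieCharacter.smulRight {R : Type*} [CommRing R] {L : Type*} [LieRing L]
    [LieAlgebra R L] (χ : LieCharacter R L) {V : Type*} [AddCommGroup V] [Module R V]
    (A : Module.End R V) : L →ₗ⁅R⁆ Module.End R V where
  toLinearMap := (χ : L →ₗ[R] R).smulRight A
  map_lie' {a b} := by
    simp [smul_lie, lie_smul]

@[simp]
lemma LieAlgebra.LieCharacter.smulRight_apply {R : Type*} [CommRing R] {L : Type*} [LieRing L]
    [LieAlgebra R L] (χ : LieCharacter R L) {V : Type*} [AddCommGroup V] [Module R V]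
    (A : Module.End R V) (y : L) : χ.smulRight A y = χ y • A :=
  rfl

lemma LieAlgebra.exists_lieCharacter_apply_ne_zero {k : Type*} [Field k] {L : Type*} [LieRing L]
    [LieAlgebra k L] {x : L} (hx : x ∉ ⁅(⊤ : LieIdeal k L), (⊤ : LieIdeal k L)⁆) :
    ∃ χ : LieCharacter k L, χ x ≠ 0 := by
  obtain ⟨f, hfx, hf⟩ := Submodule.exists_le_ker_of_notMem hx
  refine ⟨{ f with map_lie' := fun {a b} => ?_ }, hfx⟩
  simpa [LieRing.of_associative_ring_bracket, mul_comm] using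
    hf (LieSubmodule.lie_mem_lie (LieSubmodule.mem_top a) (LieSubmodule.mem_top b))

lemma LinearMap.isNilpotent_inl_comp_snd (R M : Type*) [CommRing R] [AddCommGroup M]
    [Module R M] :
    IsNilpotent (LinearMap.inl R M M ∘ₗ LinearMap.snd R M M) :=
  ⟨2, by ext <;> simp [pow_two]⟩

lemma LinearMap.inl_comp_snd_ne_zero (R M : Type*) [CommRing R] [AddCommGroup M] [Module R M]
    [Nontrivial M] : LinearMap.inl R M M ∘ₗ LinearMap.snd R M M ≠ 0 := by
  obtain ⟨m, hm⟩ := exists_ne (0 : M)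
  exact fun h => hm (congrArg Prod.fst (LinearMap.congr_fun h (0, m)))

lemma Module.subsingleton_of_not_small {K : Type*} [DivisionRing K] (hK : ¬Small.{u} K)
    (M : Type u) [AddCommGroup M] [Module K M] : Subsingleton M := by
  refine not_nontrivial_iff_subsingleton.mp fun hM => ?_
  obtain ⟨m, hm⟩ := exists_ne (0 : M)
  exact hK (small_of_injective (smul_left_injective K hm))

namespace IsAbstractJCD

variable {k : Type*} [Field k] {g : Type*} [LieRing g] [LieAlgebra k g] {x s n : g}

lemma of_not_small (hk : ¬Small.{u} k) (hx : x = s + n) (hsn : ⁅s, n⁆ = 0) :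
    IsAbstractJCD.{u} k x s n := by
  refine ⟨hx, hsn, fun V _ _ _ π => ?_⟩
  have := Module.subsingleton_of_not_small hk V
  rw [Subsingleton.elim (π s) 0, Subsingleton.elim (π n) 0]
  exact ⟨Module.End.isSemisimple_zero, IsNilpotent.zero, Commute.zero_left 0⟩

variable [Small.{u} k] (h : IsAbstractJCD.{u} k x s n) (χ : LieCharacter k g)
include h

lemma lieCharacter_apply_nilpotentPart_eq_zero : χ n = 0 := by
  obtain ⟨-, hnil, -⟩ := h.2.2 (Shrink.{u} k) (χ.smulRight 1)
  rw [LieCharacter.smulRight_apply, ← Algebra.algebraMap_eq_smul_one,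
    IsNilpotent.map_iff (algebraMap k _).injective] at hnil
  exact hnil.eq_zero

lemma lieCharacter_apply_semisimplePart_eq_zero : χ s = 0 := by
  set N := LinearMap.inl k (Shrink.{u} k) (Shrink.{u} k) ∘ₗ
    LinearMap.snd k (Shrink.{u} k) (Shrink.{u} k)
  obtain ⟨hss, -, -⟩ := h.2.2 (Shrink.{u} k × Shrink.{u} k) (χ.smulRight N)
  rw [LieCharacter.smulRight_apply] at hss
  have hsN : χ s • N = 0 := Module.End.eq_zero_of_isNilpotent_isSemisimple
    ((LinearMap.isNilpotent_inl_comp_snd k _).smul _) hss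
  exact (smul_eq_zero.mp hsN).resolve_right (LinearMap.inl_comp_snd_ne_zero k _)

lemma lieCharacter_apply_eq_zero : χ x = 0 := by
  rw [h.1, map_add, h.lieCharacter_apply_semisimplePart_eq_zero,
    h.lieCharacter_apply_nilpotentPart_eq_zero, add_zero]

end IsAbstractJCD

lemma HasAbstractJCD.eq_zero_of_not_small {k : Type*} [Field k] {g : Type*} [LieRing g]
    [LieAlgebra k g] {x : g} (hx : HasAbstractJCD.{u} k x) (hk : ¬Small.{u} k) : x = 0 := by
  have hx0 := IsAbstractJCD.of_not_small (s := x) (n := 0) hk (add_zero x).symm (lie_zero x)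
  have h0x := IsAbstractJCD.of_not_small (s := 0) (n := x) hk (zero_add x).symm (zero_lie x)
  exact congrArg Prod.fst (hx.unique (y₁ := (x, 0)) (y₂ := (0, x)) hx0 h0x)

theorem mem_derived_of_hasAbstractJCD_general
    (k : Type*) [Field k]
    (g : Type*) [LieRing g] [LieAlgebra k g] (x : g)
    (hx : HasAbstractJCD.{u} k x) :
    x ∈ ⁅(⊤ : LieIdeal k g), (⊤ : LieIdeal k g)⁆ := by
  by_cases hk : Small.{u} k
  · by_contra hmem
    obtain ⟨χ, hχx⟩ := exists_lieCharacter_apply_ne_zero hmem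
    obtain ⟨⟨s, n⟩, hsn, -⟩ := hx
    exact hχx (hsn.lieCharacter_apply_eq_zero χ)
  · rw [hx.eq_zero_of_not_small hk]
    exact zero_mem _

/-- If an element `x` of a finite-dimensional Lie algebra over a field of characteristic
zero has an abstract Jordan–Chevalley decomposition, then `x ∈ [g,g]`. -/
theorem mem_derived_of_hasAbstractJCD
    (k : Type*) [Field k] [CharZero k]
    (g : Type*) [LieRing g] [LieAlgebra k g] [FiniteDimensional k g] (x : g)
    (hx : HasAbstractJCD.{u} k x) :
    x ∈ ⁅(⊤ : LieIdeal k g), (⊤ : LieIdeal k g)⁆ :=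
  mem_derived_of_hasAbstractJCD_general k g x hx
end
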